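/- arXiv:1201.3340 — 2 statements merged into one kernel-verified Lean document; each statement's English description precedes it below -/
import Mathlib

section
/- Let A_0, A_1, B_0, B_1 be jointly distributed random variables taking values in finite sets (i.e. there is a single joint probability distribution of all four). Then the entropic CHSH inequality holds: H(A_1 B_1) + H(A_0) + H(B_0) ≤ H(A_0 B_0) + H(A_0 B_1) + H(A_1 B_0). Equivalently, I(A_0:B_0) + I(A_0:B_1) + I(A_1:B_0) − I(A_1:B_1) − H(A_0) − H(B_0) ≤ 0. -/
/-- Shannon entropy (in bits) of a finitely supported weight function,
with the convention `0 * logb 2 0 = 0` (automatic since `Real.logb 2 0 = 0`). -/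
noncomputable def shannonEntropy {β : Type*} [Fintype β] (q : β → ℝ) : ℝ :=
  -∑ b, q b * Real.logb 2 (q b)

/-- Joint Shannon entropy of a random variable `X` on a finite probability space
with weights `p`. -/
noncomputable def jointEntropy {Ω β : Type*} [Fintype Ω] [Fintype β] [DecidableEq β]
    (p : Ω → ℝ) (X : Ω → β) : ℝ :=
  shannonEntropy (fun b => ∑ ω ∈ Finset.univ.filter (fun ω => X ω = b), p ω)

open Finset Real

lemma jointEntropy_comp {Ω β γ : Type*} [Fintype Ω] [Fintype β] [DecidableEq β]
    [Fintype γ] [DecidableEq γ] (p : Ω → ℝ) (X : Ω → β) (f : β → γ) :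
    jointEntropy p (fun ω => f (X ω)) =
      shannonEntropy (fun c => ∑ b ∈ Finset.univ.filter (fun b => f b = c),
        ∑ ω ∈ Finset.univ.filter (fun ω => X ω = b), p ω) := by
  unfold jointEntropy
  congr 1
  funext c
  rw [eq_comm]
  simp only [Finset.sum_filter]
  rw [← Finset.sum_fiberwise Finset.univ X (fun ω => if f (X ω) = c then p ω else 0)]
  refine Finset.sum_congr rfl fun b _ => ?_
  have h1 : ∀ ω ∈ Finset.univ.filter (fun ω => X ω = b),
      (if f (X ω) = c then p ω else 0) = (if f b = c then p ω else 0) := by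
    intro ω hω
    rw [(Finset.mem_filter.1 hω).2]
  rw [Finset.sum_congr rfl h1]
  split_ifs <;> simp [Finset.sum_filter]

lemma shannon_map_le {β γ : Type*} [Fintype β] [Fintype γ] [DecidableEq γ]
    (f : β → γ) (q : β → ℝ) (hq : ∀ b, 0 ≤ q b) :
    shannonEntropy (fun c => ∑ b ∈ Finset.univ.filter (fun b => f b = c), q b) ≤
      shannonEntropy q := by
  unfold shannonEntropy
  rw [neg_le_neg_iff]
  set m : γ → ℝ := fun c => ∑ b ∈ Finset.univ.filter (fun b => f b = c), q b with hm
  have hsum : ∑ c, m c * Real.logb 2 (m c) = ∑ b, q b * Real.logb 2 (m (f b)) := by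
    rw [← Finset.sum_fiberwise Finset.univ f (fun b => q b * Real.logb 2 (m (f b)))]
    refine Finset.sum_congr rfl fun c _ => ?_
    rw [hm, Finset.sum_mul]
    refine Finset.sum_congr rfl fun b hb => ?_
    rw [(Finset.mem_filter.1 hb).2]
  rw [hsum]
  refine Finset.sum_le_sum fun b _ => ?_
  rcases eq_or_lt_of_le (hq b) with h | h
  · simp [← h]
  · have hle : q b ≤ m (f b) :=
      Finset.single_le_sum (f := q) (fun b' _ => hq b') (by simp)
    exact mul_le_mul_of_nonneg_left (Real.logb_le_logb_of_le one_lt_two h hle) (hq b)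

lemma shannon_map_inj {β γ : Type*} [Fintype β] [Fintype γ] [DecidableEq γ]
    (f : β → γ) (hf : Function.Injective f) (q : β → ℝ) :
    shannonEntropy (fun c => ∑ b ∈ Finset.univ.filter (fun b => f b = c), q b) =
      shannonEntropy q := by
  unfold shannonEntropy
  congr 1
  set m : γ → ℝ := fun c => ∑ b ∈ Finset.univ.filter (fun b => f b = c), q b with hm
  have hmf : ∀ b, m (f b) = q b := by
    intro b
    simp only [hm]
    rw [show (Finset.univ.filter fun b' => f b' = f b) = {b} from by
      ext b'; simp [hf.eq_iff]]
    simp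
  rw [show (Finset.univ : Finset γ) = Finset.univ.image f ∪ (Finset.univ \ Finset.univ.image f)
    from by simp]
  rw [Finset.sum_union (Finset.disjoint_sdiff)]
  have h2 : ∑ c ∈ Finset.univ \ Finset.univ.image f, m c * Real.logb 2 (m c) = 0 := by
    refine Finset.sum_eq_zero fun c hc => ?_
    have : m c = 0 := by
      rw [hm]
      refine Finset.sum_eq_zero fun b hb => ?_
      exfalso
      simp at hc hb
      exact hc b hb
    simp [this]
  rw [h2, add_zero, Finset.sum_image (fun a _ b _ h => hf h)]
  simp [hmf]

lemma ssa_q {α β γ : Type*} [Fintype α] [Fintype β] [Fintype γ]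
    (q : α × β × γ → ℝ) (hq : ∀ t, 0 ≤ q t) :
    shannonEntropy q + shannonEntropy (fun c => ∑ a, ∑ b, q (a, b, c)) ≤
      shannonEntropy (fun x : α × γ => ∑ b, q (x.1, b, x.2)) +
        shannonEntropy (fun y : β × γ => ∑ a, q (a, y.1, y.2)) := by
  classical
  set m : α → γ → ℝ := fun a c => ∑ b, q (a, b, c) with hm
  set n : β → γ → ℝ := fun b c => ∑ a, q (a, b, c) with hn
  set z : γ → ℝ := fun c => ∑ a, ∑ b, q (a, b, c) with hzdef
  have hm0 : ∀ a c, 0 ≤ m a c := fun a c => Finset.sum_nonneg fun b _ => hq _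
  have hn0 : ∀ b c, 0 ≤ n b c := fun b c => Finset.sum_nonneg fun a _ => hq _
  have hz0 : ∀ c, 0 ≤ z c := fun c =>
    Finset.sum_nonneg fun a _ => Finset.sum_nonneg fun b _ => hq _
  have hzm : ∀ c, z c = ∑ a, m a c := fun c => rfl
  have hqm : ∀ a b c, q (a, b, c) ≤ m a c := fun a b c =>
    Finset.single_le_sum (f := fun b' => q (a, b', c)) (fun b' _ => hq _) (Finset.mem_univ b)
  have hqn : ∀ a b c, q (a, b, c) ≤ n b c := fun a b c =>
    Finset.single_le_sum (f := fun a' => q (a', b, c)) (fun a' _ => hq _) (Finset.mem_univ a)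
  have hmz : ∀ a c, m a c ≤ z c := fun a c => by
    rw [hzm]
    exact Finset.single_le_sum (fun a' _ => hm0 a' c) (Finset.mem_univ a)
  have hnz : ∀ c, ∑ b, n b c = z c := fun c => by
    rw [hzdef]; exact Finset.sum_comm
  -- the four triple-sum identities
  have E1 : ∑ x : α × γ, (∑ b, q (x.1, b, x.2)) * Real.logb 2 (∑ b, q (x.1, b, x.2))
      = ∑ a, ∑ b, ∑ c, q (a, b, c) * Real.logb 2 (m a c) := by
    rw [Fintype.sum_prod_type]
    refine Finset.sum_congr rfl fun a _ => ?_
    rw [← Finset.sum_comm]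
    exact Finset.sum_congr rfl fun c _ => Finset.sum_mul _ _ _
  have E2 : ∑ y : β × γ, (∑ a, q (a, y.1, y.2)) * Real.logb 2 (∑ a, q (a, y.1, y.2))
      = ∑ a, ∑ b, ∑ c, q (a, b, c) * Real.logb 2 (n b c) := by
    rw [Fintype.sum_prod_type]
    have : ∀ b, ∑ c, (∑ a, q (a, b, c)) * Real.logb 2 (n b c)
        = ∑ c, ∑ a, q (a, b, c) * Real.logb 2 (n b c) :=
      fun b => Finset.sum_congr rfl fun c _ => Finset.sum_mul _ _ _
    calc ∑ b, ∑ c, (∑ a, q (a, b, c)) * Real.logb 2 (n b c)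
        = ∑ b, ∑ a, ∑ c, q (a, b, c) * Real.logb 2 (n b c) := by
          refine Finset.sum_congr rfl fun b _ => ?_
          rw [this b, Finset.sum_comm]
      _ = ∑ a, ∑ b, ∑ c, q (a, b, c) * Real.logb 2 (n b c) := Finset.sum_comm
  have E3 : ∑ c, z c * Real.logb 2 (z c)
      = ∑ a, ∑ b, ∑ c, q (a, b, c) * Real.logb 2 (z c) := by
    calc ∑ c, z c * Real.logb 2 (z c)
        = ∑ c, ∑ a, ∑ b, q (a, b, c) * Real.logb 2 (z c) := by
          refine Finset.sum_congr rfl fun c _ => ?_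
          rw [hzdef]
          rw [Finset.sum_mul]
          exact Finset.sum_congr rfl fun a _ => Finset.sum_mul _ _ _
      _ = ∑ a, ∑ c, ∑ b, q (a, b, c) * Real.logb 2 (z c) := Finset.sum_comm
      _ = ∑ a, ∑ b, ∑ c, q (a, b, c) * Real.logb 2 (z c) :=
          Finset.sum_congr rfl fun a _ => Finset.sum_comm
  have E4 : ∑ t : α × β × γ, q t * Real.logb 2 (q t)
      = ∑ a, ∑ b, ∑ c, q (a, b, c) * Real.logb 2 (q (a, b, c)) := by
    rw [Fintype.sum_prod_type]
    exact Finset.sum_congr rfl fun a _ => Fintype.sum_prod_type _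
  -- termwise bound
  set U : α → β → γ → ℝ := fun a b c =>
    (if 0 < q (a, b, c) then m a c * n b c / z c - q (a, b, c) else 0) / Real.log 2
    with hU
  have hlog2 : (0:ℝ) < Real.log 2 := Real.log_pos one_lt_two
  have term_le : ∀ a b c,
      q (a, b, c) * Real.logb 2 (m a c) + q (a, b, c) * Real.logb 2 (n b c)
        - q (a, b, c) * Real.logb 2 (q (a, b, c)) - q (a, b, c) * Real.logb 2 (z c)
      ≤ U a b c := by
    intro a b c
    by_cases h : 0 < q (a, b, c)
    · have hm' : 0 < m a c := lt_of_lt_of_le h (hqm a b c)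
      have hn' : 0 < n b c := lt_of_lt_of_le h (hqn a b c)
      have hz' : 0 < z c := lt_of_lt_of_le hm' (hmz a c)
      have hr : 0 < m a c * n b c / (q (a, b, c) * z c) := by positivity
      have hlog : Real.log (m a c) + Real.log (n b c) - Real.log (q (a, b, c))
          - Real.log (z c) = Real.log (m a c * n b c / (q (a, b, c) * z c)) := by
        rw [Real.log_div (by positivity) (by positivity),
          Real.log_mul hm'.ne' hn'.ne', Real.log_mul h.ne' hz'.ne']
        ring
      have key : q (a, b, c) * Real.log (m a c * n b c / (q (a, b, c) * z c))
          ≤ m a c * n b c / z c - q (a, b, c) := by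
        have h1 := mul_le_mul_of_nonneg_left (Real.log_le_sub_one_of_pos hr) h.le
        calc q (a, b, c) * Real.log (m a c * n b c / (q (a, b, c) * z c))
            ≤ q (a, b, c) * (m a c * n b c / (q (a, b, c) * z c) - 1) := h1
          _ = m a c * n b c / z c - q (a, b, c) := by
              field_simp
      have lhs_eq : q (a, b, c) * Real.logb 2 (m a c) + q (a, b, c) * Real.logb 2 (n b c)
          - q (a, b, c) * Real.logb 2 (q (a, b, c)) - q (a, b, c) * Real.logb 2 (z c)
          = (q (a, b, c) * Real.log (m a c * n b c / (q (a, b, c) * z c))) / Real.log 2 := by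
        rw [← hlog]
        simp only [Real.logb]
        field_simp
      rw [lhs_eq, hU]
      simp only [if_pos h]
      exact (div_le_div_iff_of_pos_right hlog2).mpr key
    · have hq0 : q (a, b, c) = 0 := le_antisymm (not_lt.1 h) (hq _)
      rw [hU]
      simp [hq0, if_neg h]
  have Usum : ∑ a, ∑ b, ∑ c, U a b c ≤ 0 := by
    have tb : ∀ a b c, (if 0 < q (a, b, c) then m a c * n b c / z c - q (a, b, c) else 0)
        ≤ (if 0 < z c then m a c * n b c / z c else 0) - q (a, b, c) := by
      intro a b c
      by_cases h : 0 < q (a, b, c)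
      · have hz' : 0 < z c := lt_of_lt_of_le (lt_of_lt_of_le h (hqm a b c)) (hmz a c)
        rw [if_pos h, if_pos hz']
      · have hq0 : q (a, b, c) = 0 := le_antisymm (not_lt.1 h) (hq _)
        rw [if_neg h, hq0, sub_zero]
        split_ifs with h'
        · exact div_nonneg (mul_nonneg (hm0 a c) (hn0 b c)) (hz0 c)
        · exact le_refl 0
    have hS1 : ∑ a, ∑ b, ∑ c, (if 0 < z c then m a c * n b c / z c else 0)
        = ∑ c, z c := by
      calc ∑ a, ∑ b, ∑ c, (if 0 < z c then m a c * n b c / z c else 0)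
          = ∑ a, ∑ c, ∑ b, (if 0 < z c then m a c * n b c / z c else 0) :=
            Finset.sum_congr rfl fun a _ => Finset.sum_comm
        _ = ∑ c, ∑ a, ∑ b, (if 0 < z c then m a c * n b c / z c else 0) :=
            Finset.sum_comm
        _ = ∑ c, z c := by
            refine Finset.sum_congr rfl fun c _ => ?_
            by_cases h : 0 < z c
            · simp only [if_pos h]
              calc ∑ a, ∑ b, m a c * n b c / z c
                  = ∑ a, m a c * z c / z c := Finset.sum_congr rfl fun a _ => by
                    rw [← Finset.sum_div, ← Finset.mul_sum, hnz c]
                _ = ∑ a, m a c := Finset.sum_congr rfl fun a _ => by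
                    rw [mul_div_assoc, div_self h.ne', mul_one]
                _ = z c := (hzm c).symm
            · simp only [if_neg h]
              have hzc : z c = 0 := le_antisymm (not_lt.1 h) (hz0 c)
              simp [hzc]
    have hS3 : ∑ c, z c = ∑ a, ∑ b, ∑ c, q (a, b, c) := by
      calc ∑ c, z c = ∑ c, ∑ a, ∑ b, q (a, b, c) := rfl
        _ = ∑ a, ∑ c, ∑ b, q (a, b, c) := Finset.sum_comm
        _ = ∑ a, ∑ b, ∑ c, q (a, b, c) :=
            Finset.sum_congr rfl fun a _ => Finset.sum_comm
    have S_le : ∑ a, ∑ b, ∑ c,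
        (if 0 < q (a, b, c) then m a c * n b c / z c - q (a, b, c) else 0) ≤ 0 := by
      calc ∑ a, ∑ b, ∑ c, (if 0 < q (a, b, c) then m a c * n b c / z c - q (a, b, c) else 0)
          ≤ ∑ a, ∑ b, ∑ c, ((if 0 < z c then m a c * n b c / z c else 0) - q (a, b, c)) :=
            Finset.sum_le_sum fun a _ => Finset.sum_le_sum fun b _ =>
              Finset.sum_le_sum fun c _ => tb a b c
        _ = (∑ a, ∑ b, ∑ c, (if 0 < z c then m a c * n b c / z c else 0))
            - ∑ a, ∑ b, ∑ c, q (a, b, c) := by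
            simp only [Finset.sum_sub_distrib]
        _ = 0 := by rw [hS1, hS3, sub_self]
    have : ∑ a, ∑ b, ∑ c, U a b c
        = (∑ a, ∑ b, ∑ c,
            (if 0 < q (a, b, c) then m a c * n b c / z c - q (a, b, c) else 0)) / Real.log 2 := by
      simp only [hU, ← Finset.sum_div]
    rw [this]
    exact div_nonpos_of_nonpos_of_nonneg S_le hlog2.le
  -- assemble
  simp only [shannonEntropy]
  rw [E1, E2, E3, E4]
  have distrib : ∑ a, ∑ b, ∑ c,
      (q (a, b, c) * Real.logb 2 (m a c) + q (a, b, c) * Real.logb 2 (n b c)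
        - q (a, b, c) * Real.logb 2 (q (a, b, c)) - q (a, b, c) * Real.logb 2 (z c))
      = (∑ a, ∑ b, ∑ c, q (a, b, c) * Real.logb 2 (m a c))
        + (∑ a, ∑ b, ∑ c, q (a, b, c) * Real.logb 2 (n b c))
        - (∑ a, ∑ b, ∑ c, q (a, b, c) * Real.logb 2 (q (a, b, c)))
        - (∑ a, ∑ b, ∑ c, q (a, b, c) * Real.logb 2 (z c)) := by
    simp only [Finset.sum_sub_distrib, Finset.sum_add_distrib]
  have main_le : ∑ a, ∑ b, ∑ c,
      (q (a, b, c) * Real.logb 2 (m a c) + q (a, b, c) * Real.logb 2 (n b c)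
        - q (a, b, c) * Real.logb 2 (q (a, b, c)) - q (a, b, c) * Real.logb 2 (z c)) ≤ 0 :=
    le_trans (Finset.sum_le_sum fun a _ => Finset.sum_le_sum fun b _ =>
      Finset.sum_le_sum fun c _ => term_le a b c) Usum
  linarith

lemma filter_marg_Z {α β γ : Type*} [Fintype α] [Fintype β] [Fintype γ]
    [DecidableEq γ] (q : α × β × γ → ℝ) (c : γ) :
    ∑ t ∈ Finset.univ.filter (fun t : α × β × γ => t.2.2 = c), q t
      = ∑ a, ∑ b, q (a, b, c) := by
  rw [Finset.sum_filter, Fintype.sum_prod_type]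
  refine Finset.sum_congr rfl fun a _ => ?_
  rw [Fintype.sum_prod_type]
  refine Finset.sum_congr rfl fun b _ => ?_
  simp

lemma filter_marg_XZ {α β γ : Type*} [Fintype α] [Fintype β] [Fintype γ]
    [DecidableEq α] [DecidableEq γ] (q : α × β × γ → ℝ) (x : α × γ) :
    ∑ t ∈ Finset.univ.filter (fun t : α × β × γ => (t.1, t.2.2) = x), q t
      = ∑ b, q (x.1, b, x.2) := by
  rw [Finset.sum_filter, Fintype.sum_prod_type]
  have h1 : ∀ a : α, (∑ y : β × γ, if (((a, y) : α × β × γ).1, ((a,y) : α × β × γ).2.2) = x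
      then q (a, y) else 0) = ∑ b, ∑ c, if (a, c) = x then q (a, b, c) else 0 :=
    fun a => by rw [Fintype.sum_prod_type]
  rw [Finset.sum_congr rfl fun a _ => h1 a]
  rcases x with ⟨xa, xc⟩
  rw [Finset.sum_comm]
  simp [Prod.ext_iff, ite_and]

lemma filter_marg_YZ {α β γ : Type*} [Fintype α] [Fintype β] [Fintype γ]
    [DecidableEq β] [DecidableEq γ] (q : α × β × γ → ℝ) (y : β × γ) :
    ∑ t ∈ Finset.univ.filter (fun t : α × β × γ => t.2 = y), q t
      = ∑ a, q (a, y.1, y.2) := by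
  rw [Finset.sum_filter, Fintype.sum_prod_type]
  refine Finset.sum_congr rfl fun a _ => ?_
  simp


lemma jointEntropy_comp_le {Ω β γ : Type*} [Fintype Ω] [Fintype β] [DecidableEq β]
    [Fintype γ] [DecidableEq γ] (p : Ω → ℝ) (hp0 : ∀ ω, 0 ≤ p ω) (X : Ω → β) (f : β → γ) :
    jointEntropy p (fun ω => f (X ω)) ≤ jointEntropy p X := by
  rw [jointEntropy_comp]
  exact shannon_map_le f _ (fun b => Finset.sum_nonneg fun ω _ => hp0 ω)

lemma jointEntropy_comp_inj {Ω β γ : Type*} [Fintype Ω] [Fintype β] [DecidableEq β]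
    [Fintype γ] [DecidableEq γ] (p : Ω → ℝ) (X : Ω → β) (f : β → γ)
    (hf : Function.Injective f) :
    jointEntropy p (fun ω => f (X ω)) = jointEntropy p X := by
  rw [jointEntropy_comp]
  exact shannon_map_inj f hf _

lemma jointEntropy_ssa {Ω α β γ : Type*} [Fintype Ω] [Fintype α] [DecidableEq α]
    [Fintype β] [DecidableEq β] [Fintype γ] [DecidableEq γ]
    (p : Ω → ℝ) (hp0 : ∀ ω, 0 ≤ p ω) (X : Ω → α) (Y : Ω → β) (Z : Ω → γ) :
    jointEntropy p (fun ω => (X ω, Y ω, Z ω)) + jointEntropy p Z ≤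
      jointEntropy p (fun ω => (X ω, Z ω)) + jointEntropy p (fun ω => (Y ω, Z ω)) := by
  set q : α × β × γ → ℝ :=
    fun t => ∑ ω ∈ Finset.univ.filter (fun ω => (X ω, Y ω, Z ω) = t), p ω with hqdef
  have hq0 : ∀ t, 0 ≤ q t := fun t => Finset.sum_nonneg fun ω _ => hp0 ω
  have e0 : jointEntropy p (fun ω => (X ω, Y ω, Z ω)) = shannonEntropy q := rfl
  have eZ : jointEntropy p Z = shannonEntropy (fun c => ∑ a, ∑ b, q (a, b, c)) := by
    have h2 : jointEntropy p Z
        = jointEntropy p (fun ω => (fun t : α × β × γ => t.2.2) ((X ω, Y ω, Z ω))) := rfl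
    rw [h2, jointEntropy_comp p (fun ω => (X ω, Y ω, Z ω)) (fun t : α × β × γ => t.2.2)]
    congr 1
    funext c
    exact filter_marg_Z q c
  have eXZ : jointEntropy p (fun ω => (X ω, Z ω))
      = shannonEntropy (fun x : α × γ => ∑ b, q (x.1, b, x.2)) := by
    have h2 : jointEntropy p (fun ω => (X ω, Z ω))
        = jointEntropy p (fun ω => (fun t : α × β × γ => (t.1, t.2.2)) ((X ω, Y ω, Z ω))) := rfl
    rw [h2, jointEntropy_comp p (fun ω => (X ω, Y ω, Z ω)) (fun t : α × β × γ => (t.1, t.2.2))]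
    congr 1
    funext x
    exact filter_marg_XZ q x
  have eYZ : jointEntropy p (fun ω => (Y ω, Z ω))
      = shannonEntropy (fun y : β × γ => ∑ a, q (a, y.1, y.2)) := by
    have h2 : jointEntropy p (fun ω => (Y ω, Z ω))
        = jointEntropy p (fun ω => (fun t : α × β × γ => t.2) ((X ω, Y ω, Z ω))) := rfl
    rw [h2, jointEntropy_comp p (fun ω => (X ω, Y ω, Z ω)) (fun t : α × β × γ => t.2)]
    congr 1
    funext y
    exact filter_marg_YZ q y
  rw [e0, eZ, eXZ, eYZ]
  exact ssa_q q hq0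

/-- The entropic CHSH inequality of Braunstein–Caves: for jointly distributed finite
random variables `A₀, A₁, B₀, B₁`,
`H(A₁B₁) + H(A₀) + H(B₀) ≤ H(A₀B₀) + H(A₀B₁) + H(A₁B₀)`. -/
theorem entropic_CHSH {Ω α₀ α₁ β₀ β₁ : Type*} [Fintype Ω]
    [Fintype α₀] [DecidableEq α₀] [Fintype α₁] [DecidableEq α₁]
    [Fintype β₀] [DecidableEq β₀] [Fintype β₁] [DecidableEq β₁]
    (p : Ω → ℝ) (hp0 : ∀ ω, 0 ≤ p ω) (hp1 : ∑ ω, p ω = 1)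
    (A₀ : Ω → α₀) (A₁ : Ω → α₁) (B₀ : Ω → β₀) (B₁ : Ω → β₁) :
    jointEntropy p (fun ω => (A₁ ω, B₁ ω)) + jointEntropy p A₀ + jointEntropy p B₀ ≤
      jointEntropy p (fun ω => (A₀ ω, B₀ ω)) + jointEntropy p (fun ω => (A₀ ω, B₁ ω)) +
        jointEntropy p (fun ω => (A₁ ω, B₀ ω)) := by
  -- The Braunstein–Caves chain of inequalities.
  -- Step 1: H(A₁B₁) ≤ H(A₁, B₁, (A₀,B₀)) (data processing / monotonicity)
  have h1 : jointEntropy p (fun ω => (A₁ ω, B₁ ω)) ≤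
      jointEntropy p (fun ω => (A₁ ω, B₁ ω, A₀ ω, B₀ ω)) :=
    jointEntropy_comp_le p hp0 (fun ω => (A₁ ω, B₁ ω, A₀ ω, B₀ ω))
      (fun t : α₁ × β₁ × α₀ × β₀ => (t.1, t.2.1))
  -- Step 2: SSA with Z = (A₀,B₀)
  have h2 : jointEntropy p (fun ω => (A₁ ω, B₁ ω, A₀ ω, B₀ ω)) +
      jointEntropy p (fun ω => (A₀ ω, B₀ ω)) ≤
      jointEntropy p (fun ω => (A₁ ω, A₀ ω, B₀ ω)) +
        jointEntropy p (fun ω => (B₁ ω, A₀ ω, B₀ ω)) :=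
    jointEntropy_ssa p hp0 A₁ B₁ (fun ω => (A₀ ω, B₀ ω))
  -- Step 3: SSA with Z = B₀
  have h3 : jointEntropy p (fun ω => (A₁ ω, A₀ ω, B₀ ω)) + jointEntropy p B₀ ≤
      jointEntropy p (fun ω => (A₁ ω, B₀ ω)) + jointEntropy p (fun ω => (A₀ ω, B₀ ω)) :=
    jointEntropy_ssa p hp0 A₁ A₀ B₀
  -- reorder (B₁, A₀, B₀) ↦ (B₁, B₀, A₀)
  have h4 : jointEntropy p (fun ω => (B₁ ω, B₀ ω, A₀ ω)) =
      jointEntropy p (fun ω => (B₁ ω, A₀ ω, B₀ ω)) :=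
    jointEntropy_comp_inj p (fun ω => (B₁ ω, A₀ ω, B₀ ω))
      (fun t : β₁ × α₀ × β₀ => (t.1, t.2.2, t.2.1))
      (fun t t' h => by
        rcases t with ⟨x, y, z⟩
        rcases t' with ⟨x', y', z'⟩
        simp only [Prod.ext_iff] at h ⊢
        tauto)
  -- Step 5: SSA with Z = A₀
  have h5 : jointEntropy p (fun ω => (B₁ ω, B₀ ω, A₀ ω)) + jointEntropy p A₀ ≤
      jointEntropy p (fun ω => (B₁ ω, A₀ ω)) + jointEntropy p (fun ω => (B₀ ω, A₀ ω)) :=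
    jointEntropy_ssa p hp0 B₁ B₀ A₀
  -- swaps
  have h6 : jointEntropy p (fun ω => (A₀ ω, B₁ ω)) =
      jointEntropy p (fun ω => (B₁ ω, A₀ ω)) :=
    jointEntropy_comp_inj p (fun ω => (B₁ ω, A₀ ω)) Prod.swap Prod.swap_injective
  have h7 : jointEntropy p (fun ω => (A₀ ω, B₀ ω)) =
      jointEntropy p (fun ω => (B₀ ω, A₀ ω)) :=
    jointEntropy_comp_inj p (fun ω => (B₀ ω, A₀ ω)) Prod.swap Prod.swap_injective
  linarith
end

section
/- (Entropic bilocality inequality, class 7.) Let A₀, A₁, B, C₀, C₁ be jointly distributed random variables taking values in finite sets such that the pair (A₀,A₁) is independent of the pair (C₀,C₁), i.e. H(A₀A₁C₀C₁) = H(A₀A₁) + H(C₀C₁). Then H(A₀) + H(C₀) + H(A₁BC₁) ≤ H(A₀BC₁) + H(A₁BC₀). -/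
/-!
The claim is the sum of four Shannon-type inequalities and the independence hypothesis
`H(A₀A₁C₀C₁) = H(A₀A₁) + H(C₀C₁)`:
`H(A₁ | A₀BC₁) ≤ H(A₁ | A₀)`, `H(C₁ | A₁BC₀) ≤ H(C₁ | C₀)`, `I(A₀ ; C₀ | A₁BC₁) ≥ 0` and
`H(A₀A₁C₀C₁) ≤ H(A₀A₁BC₀C₁)`. The first three are instances of strong subadditivity, which
follows from `log x ≤ x - 1`.
-/

open Finset

section

variable {Ω : Type*} [Fintype Ω] {p : Ω → ℝ}
variable {β β' ζ σ τ : Type*} [DecidableEq β] [DecidableEq β'] [DecidableEq ζ] [DecidableEq σ]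
  [DecidableEq τ]

variable (p) in
noncomputable def marginal (X : Ω → β) (b : β) : ℝ :=
  ∑ ω ∈ univ.filter (fun ω => X ω = b), p ω

lemma marginal_nonneg (hp0 : ∀ ω, 0 ≤ p ω) (X : Ω → β) (b : β) : 0 ≤ marginal p X b :=
  sum_nonneg fun ω _ => hp0 ω

lemma marginal_le_marginal_of_determines (hp0 : ∀ ω, 0 ≤ p ω) {X : Ω → β} {Y : Ω → β'}
    (h : ∀ ω ω', Y ω = Y ω' → X ω = X ω') (ω : Ω) :
    marginal p Y (Y ω) ≤ marginal p X (X ω) :=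
  sum_le_sum_of_subset_of_nonneg
    (fun ω' hω' => by simp only [mem_filter, mem_univ, true_and] at hω' ⊢; exact h _ _ hω')
    fun ω' _ _ => hp0 ω'

lemma marginal_pos (hp0 : ∀ ω, 0 ≤ p ω) (X : Ω → β) {ω : Ω} (hp : 0 < p ω) :
    0 < marginal p X (X ω) :=
  hp.trans_le (single_le_sum (f := p) (fun ω' _ => hp0 ω') (by simp))

variable [Fintype β]

variable (p) in
lemma sum_mul_marginal (X : Ω → β) (f : β → ℝ) :
    ∑ ω, p ω * f (X ω) = ∑ b, marginal p X b * f b := by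
  rw [← sum_fiberwise univ X]
  refine sum_congr rfl fun b _ => ?_
  rw [marginal, sum_mul]
  exact sum_congr rfl fun ω hω => by rw [(mem_filter.mp hω).2]

variable (p) in
lemma sum_marginal (X : Ω → β) : ∑ b, marginal p X b = ∑ ω, p ω :=
  sum_fiberwise univ X p

variable (p) in
lemma jointEntropy_eq_sum_log (X : Ω → β) :
    jointEntropy p X = -(∑ ω, p ω * Real.log (marginal p X (X ω))) / Real.log 2 := by
  rw [sum_mul_marginal p X fun b => Real.log (marginal p X b), neg_div, sum_div]
  simp only [mul_div_assoc]
  rfl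

lemma jointEntropy_le_of_determines [Fintype β'] (hp0 : ∀ ω, 0 ≤ p ω) {X : Ω → β} {Y : Ω → β'}
    (h : ∀ ω ω', Y ω = Y ω' → X ω = X ω') : jointEntropy p X ≤ jointEntropy p Y := by
  rw [jointEntropy_eq_sum_log, jointEntropy_eq_sum_log]
  refine div_le_div_of_nonneg_right (neg_le_neg (sum_le_sum fun ω _ => ?_))
    (Real.log_nonneg one_le_two)
  rcases (hp0 ω).eq_or_lt with hp | hp
  · simp [← hp]
  · exact mul_le_mul_of_nonneg_left (Real.log_le_log (marginal_pos hp0 Y hp)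
      (marginal_le_marginal_of_determines hp0 h ω)) hp.le

lemma jointEntropy_congr [Fintype β'] (hp0 : ∀ ω, 0 ≤ p ω) {X : Ω → β} {Y : Ω → β'}
    (h : ∀ ω ω', X ω = X ω' ↔ Y ω = Y ω') : jointEntropy p X = jointEntropy p Y :=
  (jointEntropy_le_of_determines hp0 fun ω ω' => (h ω ω').2).antisymm
    (jointEntropy_le_of_determines hp0 fun ω ω' => (h ω ω').1)

lemma sum_mul_log_le_sum_mul_sub_sum (hp0 : ∀ ω, 0 ≤ p ω) {r : Ω → ℝ}
    (hr : ∀ ω, 0 < p ω → 0 < r ω) :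
    ∑ ω, p ω * Real.log (r ω) ≤ ∑ ω, p ω * r ω - ∑ ω, p ω := by
  rw [← sum_sub_distrib]
  refine sum_le_sum fun ω _ => ?_
  rcases (hp0 ω).eq_or_lt with hp | hp
  · simp [← hp]
  · simpa [mul_sub] using mul_le_mul_of_nonneg_left (Real.log_le_sub_one_of_pos (hr ω hp)) hp.le

lemma sum_mul_div_marginal_le (X : Ω → β) {f : β → ℝ} (hf : ∀ b, 0 ≤ f b) :
    ∑ ω, p ω * (f (X ω) / marginal p X (X ω)) ≤ ∑ b, f b := by
  rw [sum_mul_marginal p X fun b => f b / marginal p X b]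
  refine sum_le_sum fun b _ => ?_
  rw [mul_div_left_comm]
  exact mul_le_of_le_one_right (hf b) (div_self_le_one _)

variable (p) in
lemma sum_marginal_prodMk [Fintype σ] (Z : Ω → ζ) (X : Ω → σ) (z : ζ) :
    ∑ x, marginal p (fun ω => (Z ω, X ω)) (z, x) = marginal p Z z := by
  rw [marginal, ← sum_fiberwise _ X p]
  refine sum_congr rfl fun x _ => sum_congr ?_ fun _ _ => rfl
  ext ω
  simp

variable (p) in
/-- The weight `p(z,x) p(z,y) / p(z)` under which `X` and `Y` are independent given `Z`. -/
noncomputable def condIndepWeight (Z : Ω → ζ) (X : Ω → σ) (Y : Ω → τ) (b : ζ × σ × τ) : ℝ :=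
  marginal p (fun ω => (Z ω, X ω)) (b.1, b.2.1) * marginal p (fun ω => (Z ω, Y ω)) (b.1, b.2.2) /
    marginal p Z b.1

variable (p) in
lemma sum_condIndepWeight [Fintype ζ] [Fintype σ] [Fintype τ] (Z : Ω → ζ) (X : Ω → σ)
    (Y : Ω → τ) :
    ∑ b, condIndepWeight p Z X Y b = ∑ ω, p ω := by
  simp only [Fintype.sum_prod_type, condIndepWeight, ← sum_div, ← mul_sum, ← sum_mul,
    sum_marginal_prodMk, mul_self_div_self, sum_marginal]

lemma condIndepWeight_nonneg (hp0 : ∀ ω, 0 ≤ p ω) (Z : Ω → ζ) (X : Ω → σ) (Y : Ω → τ)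
    (b : ζ × σ × τ) : 0 ≤ condIndepWeight p Z X Y b := by
  unfold condIndepWeight
  have := marginal_nonneg hp0 Z b.1
  have := marginal_nonneg hp0 (fun ω => (Z ω, X ω)) (b.1, b.2.1)
  have := marginal_nonneg hp0 (fun ω => (Z ω, Y ω)) (b.1, b.2.2)
  positivity

/-- Gibbs' inequality for `r = p(z,x) p(z,y) / (p(z) p(z,x,y))`, whose `p`-mean is at most the
total mass. -/
theorem jointEntropy_submodular [Fintype ζ] [Fintype σ] [Fintype τ] (hp0 : ∀ ω, 0 ≤ p ω)
    (Z : Ω → ζ) (X : Ω → σ) (Y : Ω → τ) :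
    jointEntropy p (fun ω => (Z ω, X ω, Y ω)) + jointEntropy p Z ≤
      jointEntropy p (fun ω => (Z ω, X ω)) + jointEntropy p (fun ω => (Z ω, Y ω)) := by
  set ZX := fun ω => (Z ω, X ω)
  set ZY := fun ω => (Z ω, Y ω)
  set W := fun ω => (Z ω, X ω, Y ω)
  set r : Ω → ℝ := fun ω => condIndepWeight p Z X Y (W ω) / marginal p W (W ω)
  have hr : ∀ ω, r ω = marginal p ZX (ZX ω) * marginal p ZY (ZY ω) /
      marginal p Z (Z ω) / marginal p W (W ω) := fun ω => rfl
  have hpos : ∀ ω, 0 < p ω → 0 < marginal p Z (Z ω) ∧ 0 < marginal p ZX (ZX ω) ∧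
      0 < marginal p ZY (ZY ω) ∧ 0 < marginal p W (W ω) := fun ω hp =>
    ⟨marginal_pos hp0 Z hp, marginal_pos hp0 ZX hp, marginal_pos hp0 ZY hp, marginal_pos hp0 W hp⟩
  have hr_pos : ∀ ω, 0 < p ω → 0 < r ω := fun ω hp => by
    obtain ⟨hZ, hZX, hZY, hW⟩ := hpos ω hp
    rw [hr]
    positivity
  have hlog : ∀ ω, p ω * Real.log (r ω) =
      p ω * Real.log (marginal p ZX (ZX ω)) + p ω * Real.log (marginal p ZY (ZY ω)) -
        p ω * Real.log (marginal p Z (Z ω)) - p ω * Real.log (marginal p W (W ω)) := by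
    intro ω
    rcases (hp0 ω).eq_or_lt with hp | hp
    · simp [← hp]
    obtain ⟨hZ, hZX, hZY, hW⟩ := hpos ω hp
    rw [hr, Real.log_div (by positivity) hW.ne', Real.log_div (by positivity) hZ.ne',
      Real.log_mul hZX.ne' hZY.ne']
    ring
  have hmass : ∑ ω, p ω * r ω ≤ ∑ ω, p ω :=
    (sum_mul_div_marginal_le W (condIndepWeight_nonneg hp0 Z X Y)).trans_eq
      (sum_condIndepWeight p Z X Y)
  have hgibbs := sum_mul_log_le_sum_mul_sub_sum hp0 hr_pos
  simp only [hlog, sum_sub_distrib, sum_add_distrib] at hgibbs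
  simp only [jointEntropy_eq_sum_log, ← add_div]
  rw [div_le_div_iff_of_pos_right (Real.log_pos one_lt_two)]
  linarith

end

theorem entropic_bilocality_class7_general {Ω α₀ α₁ β γ₀ γ₁ : Type*} [Fintype Ω]
    [Fintype α₀] [DecidableEq α₀] [Fintype α₁] [DecidableEq α₁]
    [Fintype β] [DecidableEq β]
    [Fintype γ₀] [DecidableEq γ₀] [Fintype γ₁] [DecidableEq γ₁]
    (p : Ω → ℝ) (hp0 : ∀ ω, 0 ≤ p ω)
    (A₀ : Ω → α₀) (A₁ : Ω → α₁) (B : Ω → β) (C₀ : Ω → γ₀) (C₁ : Ω → γ₁)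
    (hind : jointEntropy p (fun ω => (A₀ ω, A₁ ω, C₀ ω, C₁ ω)) =
      jointEntropy p (fun ω => (A₀ ω, A₁ ω)) + jointEntropy p (fun ω => (C₀ ω, C₁ ω))) :
    jointEntropy p A₀ +
      jointEntropy p C₀ +
      jointEntropy p (fun ω => (A₁ ω, B ω, C₁ ω)) ≤
      jointEntropy p (fun ω => (A₀ ω, B ω, C₁ ω)) +
      jointEntropy p (fun ω => (A₁ ω, B ω, C₀ ω)) := by
  have hA := jointEntropy_submodular hp0 A₀ A₁ (fun ω => (B ω, C₁ ω))
  have hC := jointEntropy_submodular hp0 C₀ C₁ (fun ω => (A₁ ω, B ω))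
  have hB := jointEntropy_submodular hp0 (fun ω => (A₁ ω, B ω, C₁ ω)) A₀ C₀
  have hmono : jointEntropy p (fun ω => (A₀ ω, A₁ ω, C₀ ω, C₁ ω)) ≤
      jointEntropy p (fun ω => ((A₁ ω, B ω, C₁ ω), A₀ ω, C₀ ω)) :=
    jointEntropy_le_of_determines hp0 fun ω ω' => by simp only [Prod.mk.injEq]; tauto
  have e₁ : jointEntropy p (fun ω => (C₀ ω, A₁ ω, B ω)) =
      jointEntropy p (fun ω => (A₁ ω, B ω, C₀ ω)) :=
    jointEntropy_congr hp0 fun ω ω' => by simp only [Prod.mk.injEq]; tauto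
  have e₂ : jointEntropy p (fun ω => ((A₁ ω, B ω, C₁ ω), A₀ ω)) =
      jointEntropy p (fun ω => (A₀ ω, A₁ ω, B ω, C₁ ω)) :=
    jointEntropy_congr hp0 fun ω ω' => by simp only [Prod.mk.injEq]; tauto
  have e₃ : jointEntropy p (fun ω => ((A₁ ω, B ω, C₁ ω), C₀ ω)) =
      jointEntropy p (fun ω => (C₀ ω, C₁ ω, A₁ ω, B ω)) :=
    jointEntropy_congr hp0 fun ω ω' => by simp only [Prod.mk.injEq]; tauto
  linarith

/-- Entropic bilocality inequality (class 7 of Table II): for jointly distributed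
finite random variables `A₀, A₁, B, C₀, C₁` with `(A₀,A₁)` independent of `(C₀,C₁)`
(in the entropic sense `H(A₀A₁C₀C₁) = H(A₀A₁) + H(C₀C₁)`), one has
`H(A₀) + H(C₀) + H(A₁BC₁) ≤ H(A₀BC₁) + H(A₁BC₀)`. -/
theorem entropic_bilocality_class7 {Ω α₀ α₁ β γ₀ γ₁ : Type*} [Fintype Ω]
    [Fintype α₀] [DecidableEq α₀] [Fintype α₁] [DecidableEq α₁]
    [Fintype β] [DecidableEq β]
    [Fintype γ₀] [DecidableEq γ₀] [Fintype γ₁] [DecidableEq γ₁]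
    (p : Ω → ℝ) (hp0 : ∀ ω, 0 ≤ p ω) (hp1 : ∑ ω, p ω = 1)
    (A₀ : Ω → α₀) (A₁ : Ω → α₁) (B : Ω → β) (C₀ : Ω → γ₀) (C₁ : Ω → γ₁)
    (hind : jointEntropy p (fun ω => (A₀ ω, A₁ ω, C₀ ω, C₁ ω)) =
      jointEntropy p (fun ω => (A₀ ω, A₁ ω)) + jointEntropy p (fun ω => (C₀ ω, C₁ ω))) :
    jointEntropy p A₀ +
      jointEntropy p C₀ +
      jointEntropy p (fun ω => (A₁ ω, B ω, C₁ ω)) ≤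
      jointEntropy p (fun ω => (A₀ ω, B ω, C₁ ω)) +
      jointEntropy p (fun ω => (A₁ ω, B ω, C₀ ω)) :=
  entropic_bilocality_class7_general p hp0 A₀ A₁ B C₀ C₁ hind
end
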